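/- arXiv:1706.05796 — 3 statements merged into one kernel-verified Lean document; each statement's English description precedes it below -/
import Mathlib

section
/- In the case σ(N) = N, for every bounded measurable I : ℝ → ℝ and every M > 0 there exists R > 0 such that for all w ≤ 0 and N̄ ≥ 0 with −w N̄ ≥ R one has Z_{N̄,I}(w) ≥ M; that is, Z_{N̄,I}(w) → +∞ as −w N̄ → +∞. -/
/-!
Write `d = (V_F - V_R)/3` and `c = 2 I(w) + 2 w N̄`. On the square `v ∈ [V_R, V_R + d]`,
`v' ∈ [V_R + 2d, V_F]` the exponent is at least `d (2 V_R - c) / (2a)`, so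
`Z ≥ d² exp (d (2 V_R - c) / (2a))`, and `2 V_R - c ≥ 2 V_R - 2 sup |I| - 2 w N̄ → ∞`.
For this lower bound to be meaningful the outer integrand must be integrable (otherwise the
Bochner integral is `0`): since `(v' - v)(v' + v - c) = φ v' - φ v` with `φ t = t² - c t`, the
outer integrand is at most a constant times the Gaussian `exp (-φ v / (2a))`.
-/

open MeasureTheory Real Set Filter

/-- The partition function `Z_{N̄,I}(w)` of the stationary LIF problem. -/
noncomputable def Zfun (a VR VF : ℝ) (I σ : ℝ → ℝ) (w N : ℝ) : ℝ :=
  ∫ v in Set.Iic VF, ∫ v' in Set.Icc (max VR v) VF,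
    Real.exp ((v' - v) * (v' + v - 2 * I w - 2 * w * σ N) / (2 * a))

theorem integrable_exp_neg_mul_sq_add_mul {b : ℝ} (hb : 0 < b) (c : ℝ) :
    Integrable fun x : ℝ => exp (-b * x ^ 2 + c * x) := by
  refine (((integrable_exp_neg_mul_sq hb).comp_sub_right (c / (2 * b))).const_mul
    (exp (c ^ 2 / (4 * b)))).congr (ae_of_all _ fun x => ?_)
  dsimp only
  rw [← exp_add]
  congr 1
  field_simp
  ring

theorem antitone_setIntegral_Icc {f : ℝ → ℝ} (hf : Continuous f) (hf0 : 0 ≤ f) (b : ℝ) :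
    Antitone fun s => ∫ t in Icc s b, f t := fun _ _ hs =>
  setIntegral_mono_set hf.integrableOn_Icc (ae_of_all _ hf0) (Icc_subset_Icc_left hs).eventuallyLE

theorem mul_measureReal_le_setIntegral {X : Type*} [MeasurableSpace X] {μ : Measure X}
    {f : X → ℝ} {s t : Set X} {m : ℝ} (ht : MeasurableSet t) (hμt : μ t ≠ ⊤) (hts : t ⊆ s)
    (hf : IntegrableOn f s μ) (hf0 : 0 ≤ᵐ[μ.restrict s] f) (hm : ∀ x ∈ t, m ≤ f x) :
    m * μ.real t ≤ ∫ x in s, f x ∂μ :=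
  (setIntegral_ge_of_const_le_real ht hμt hm (hf.mono_set hts)).trans
    (setIntegral_mono_set hf hf0 hts.eventuallyLE)

noncomputable def Zinner (a VR VF c v : ℝ) : ℝ :=
  ∫ v' in Icc (max VR v) VF, exp ((v' - v) * (v' + v - c) / (2 * a))

theorem Zfun_eq_integral_Zinner (a VR VF : ℝ) (I σ : ℝ → ℝ) (w N : ℝ) :
    Zfun a VR VF I σ w N = ∫ v in Iic VF, Zinner a VR VF (2 * I w + 2 * w * σ N) v := by
  simp only [Zfun, Zinner, sub_sub]

theorem Zinner_nonneg (a VR VF c v : ℝ) : 0 ≤ Zinner a VR VF c v :=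
  integral_nonneg fun _ => (exp_pos _).le

theorem Zinner_eq_mul_exp (a VR VF c v : ℝ) :
    Zinner a VR VF c v = (∫ t in Icc (max VR v) VF, exp ((t ^ 2 - c * t) / (2 * a))) *
      exp (-((v ^ 2 - c * v) / (2 * a))) := by
  rw [Zinner, ← integral_mul_const]
  congr 1 with t
  rw [← exp_add]
  ring_nf

section Zinner

variable {a VR VF c : ℝ}

theorem integrable_Zinner (ha : 0 < a) : Integrable (Zinner a VR VF c) := by
  set G : ℝ → ℝ := fun s => ∫ t in Icc s VF, exp ((t ^ 2 - c * t) / (2 * a))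
  have hG : Antitone G := antitone_setIntegral_Icc (by fun_prop) (fun _ => (exp_pos _).le) VF
  have hgauss : Integrable fun v => exp (-((v ^ 2 - c * v) / (2 * a))) := by
    refine (integrable_exp_neg_mul_sq_add_mul (b := 1 / (2 * a)) (by positivity)
      (c / (2 * a))).congr (ae_of_all _ fun v => ?_)
    dsimp only
    congr 1
    field_simp
    ring
  rw [show Zinner a VR VF c = fun v => G (max VR v) * exp (-((v ^ 2 - c * v) / (2 * a))) from
    funext (Zinner_eq_mul_exp a VR VF c)]
  refine (hgauss.const_mul (G VR)).mono'
    ((hG.measurable.comp (by fun_prop)).mul (by fun_prop)).aestronglyMeasurable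
    (ae_of_all _ fun v => ?_)
  rw [Real.norm_of_nonneg (mul_nonneg (integral_nonneg fun _ => (exp_pos _).le) (exp_pos _).le)]
  exact mul_le_mul_of_nonneg_right (hG (le_max_left _ _)) (exp_pos _).le

theorem mul_exp_le_Zinner (ha : 0 ≤ a) (hc : c ≤ 2 * VR) {v : ℝ}
    (hv : v ∈ Icc VR (VR + (VF - VR) / 3)) :
    (VF - VR) / 3 * exp ((VF - VR) / 3 * (2 * VR - c) / (2 * a)) ≤ Zinner a VR VF c v := by
  set d := (VF - VR) / 3 with hd_def
  have hd : 0 ≤ d := by linarith [hv.1.trans hv.2]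
  have hvol : volume.real (Icc (VR + 2 * d) VF) = d := by
    rw [Real.volume_real_Icc_of_le (by linarith)]
    linarith
  have hbound : ∀ v' ∈ Icc (VR + 2 * d) VF,
      exp (d * (2 * VR - c) / (2 * a)) ≤ exp ((v' - v) * (v' + v - c) / (2 * a)) := by
    intro v' hv'
    have key : d * (2 * VR - c) ≤ (v' - v) * (v' + v - c) :=
      mul_le_mul (by linarith [hv.2, hv'.1]) (by linarith [hv.1, hv'.1]) (by linarith)
        (by linarith [hv.2, hv'.1])
    exact exp_le_exp.2 (div_le_div_of_nonneg_right key (by positivity))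
  have hsub : Icc (VR + 2 * d) VF ⊆ Icc (max VR v) VF :=
    Icc_subset_Icc_left (max_le (by linarith) (by linarith [hv.2]))
  have h := mul_measureReal_le_setIntegral (μ := volume) measurableSet_Icc
    measure_Icc_lt_top.ne hsub (by fun_prop : Continuous _).integrableOn_Icc
    (ae_of_all _ fun _ => (exp_pos _).le) hbound
  rw [hvol, mul_comm] at h
  exact h

theorem sq_mul_exp_le_integral_Zinner (ha : 0 < a) (hV : VR ≤ VF) (hc : c ≤ 2 * VR) :
    ((VF - VR) / 3) ^ 2 * exp ((VF - VR) / 3 * (2 * VR - c) / (2 * a)) ≤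
      ∫ v in Iic VF, Zinner a VR VF c v := by
  have hvol : volume.real (Icc VR (VR + (VF - VR) / 3)) = (VF - VR) / 3 := by
    rw [Real.volume_real_Icc_of_le (by linarith)]
    ring
  have h := mul_measureReal_le_setIntegral (s := Iic VF) measurableSet_Icc measure_Icc_lt_top.ne
    (fun v hv => (by linarith [hv.2] : v ≤ VF)) (integrable_Zinner ha).integrableOn
    (ae_of_all _ (Zinner_nonneg a VR VF c)) fun v hv => mul_exp_le_Zinner ha.le hc hv
  rw [hvol] at h
  linarith

end Zinner

theorem stmt8_general (a VR VF : ℝ) (ha : 0 < a) (hV : VR < VF)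
    (I : ℝ → ℝ) (nI : ℝ) (hI : ∀ x, |I x| ≤ nI) :
    ∀ M : ℝ, 0 < M → ∃ R > 0, ∀ w N : ℝ, w ≤ 0 → 0 ≤ N → R ≤ -w * N →
      M ≤ Zfun a VR VF I (fun x => x) w N := by
  intro M _
  set d := (VF - VR) / 3
  have hlim : Tendsto (fun t => d ^ 2 * exp (d * (2 * VR - 2 * nI + 2 * t) / (2 * a)))
      atTop atTop := by
    refine (tendsto_exp_atTop.comp ?_).const_mul_atTop (by positivity)
    refine ((tendsto_id.const_mul_atTop (by positivity : 0 < d / a)).atTop_add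
      (tendsto_const_nhds (x := d * (VR - nI) / a))).congr fun t => ?_
    simp only [id]
    field_simp
    ring
  obtain ⟨R, hR⟩ := eventually_atTop.1 ((hlim.eventually_ge_atTop M).and
    ((eventually_ge_atTop (nI - VR)).and (eventually_gt_atTop 0)))
  refine ⟨R, (hR R le_rfl).2.2, fun w N _ _ hRwN => ?_⟩
  obtain ⟨hM, hnI, -⟩ := hR _ hRwN
  have hc : 2 * VR - 2 * nI + 2 * (-w * N) ≤ 2 * VR - (2 * I w + 2 * w * N) := by
    linarith [(abs_le.1 (hI w)).2]
  rw [Zfun_eq_integral_Zinner]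
  calc M ≤ _ := hM
    _ ≤ d ^ 2 * exp (d * (2 * VR - (2 * I w + 2 * w * N)) / (2 * a)) := by gcongr
    _ ≤ _ := sq_mul_exp_le_integral_Zinner ha hV.le (by linarith)

/-- In the case `σ(N) = N`, `Z_{N̄,I}(w) → +∞` as `−w N̄ → +∞`
(Lemma 3.2, estimate (3.14)). -/
theorem stmt8 (a VR VF : ℝ) (ha : 0 < a) (hV : VR < VF)
    (I : ℝ → ℝ) (hImeas : Measurable I) (nI : ℝ) (hI : ∀ x, |I x| ≤ nI) :
    ∀ M : ℝ, 0 < M → ∃ R > 0, ∀ w N : ℝ, w ≤ 0 → 0 ≤ N → R ≤ -w * N →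
      M ≤ Zfun a VR VF I (fun x => x) w N :=
  stmt8_general a VR VF ha hV I nI hI
end

section
/- Realization of a prescribed output signal (Theorem 4.1, existence part): assume σ is of class C² with σ' ≥ 0 and σ_M = sup σ < ∞, let I : ℝ → ℝ be bounded measurable, and let S : ℝ → [0,∞) be measurable with ∫_ℝ S(w) dw = 1 and ∫_{−∞}^0 S(w) · exp( (‖I‖_∞ + |w| σ_M)² / a ) dw < ∞. Then there exists N̄ > 0 such that N̄ · ∫_ℝ S(w) Z_{N̄,I}(w) dw = a; consequently H(w) := (N̄/a) Z_{N̄,I}(w) S(w) is a probability density (∫_ℝ H = 1) whose associated stationary state has normalized output signal S, i.e. N̄ S(w) = a H(w)/Z_{N̄,I}(w) and a ∫_ℝ H(w)/Z_{N̄,I}(w) dw = N̄. -/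
open MeasureTheory Real Set Filter

/-!
`Z_{N̄,I}(w)` depends on `(w, N̄)` only through the drift `c = 2 I(w) + 2 w σ(N̄)`, as `φ(c)` for a
function `φ` that is positive, continuous and decreasing, and that grows at most like
`exp (c² / 4a)` (complete the square in the integrand and integrate the resulting Gaussian in `v`).
For `N̄ ≥ 0` the drift lies between `-2 (‖I‖ + w⁻ σ_M)` and `2 (‖I‖ + |w| σ_M)`. The lower end makes
`w ↦ S(w) φ(c)` dominated uniformly in `N̄` by a function that the exponential moment of `S` on
`w ≤ 0` makes integrable, so `F(N̄) = ∫ S φ(c)` is continuous on `[0, ∞)`; the upper end bounds `F`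
below by a positive constant. The intermediate value theorem then solves `N̄ F(N̄) = a`, and the
remaining identities are algebra.
-/

lemma exists_pos_mul_eq_of_le {F : ℝ → ℝ} (hF : ContinuousOn F (Ici 0)) {m : ℝ} (hm : 0 < m)
    (hFm : ∀ N, 0 ≤ N → m ≤ F N) {a : ℝ} (ha : 0 < a) : ∃ N > 0, N * F N = a := by
  have hb : 0 ≤ a / m := by positivity
  have hab : a ≤ a / m * F (a / m) :=
    (div_mul_cancel₀ a hm.ne').symm.le.trans (mul_le_mul_of_nonneg_left (hFm _ hb) hb)
  obtain ⟨N, hN, hNa⟩ := intermediate_value_Icc hb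
    (continuousOn_id.mul (hF.mono Icc_subset_Ici_self)) ⟨by simpa using ha.le, hab⟩
  refine ⟨N, lt_of_le_of_ne hN.1 ?_, hNa⟩
  rintro rfl
  simp [ha.ne] at hNa

lemma integrable_exp_neg_sq_sub_div {a : ℝ} (ha : 0 < a) (t : ℝ) :
    Integrable fun v => exp (-(v - t) ^ 2 / (2 * a)) := by
  have h : (fun v => exp (-(v - t) ^ 2 / (2 * a))) = fun v => exp (-(2 * a)⁻¹ * (v - t) ^ 2) := by
    ext v; ring_nf
  rw [h]
  exact (integrable_exp_neg_mul_sq (by positivity)).comp_sub_right t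

noncomputable def partitionInner (a VR VF c v : ℝ) : ℝ :=
  ∫ v' in Icc (max VR v) VF, exp ((v' - v) * (v' + v - c) / (2 * a))

noncomputable def partitionFn (a VR VF c : ℝ) : ℝ :=
  ∫ v in Iic VF, partitionInner a VR VF c v

def drift (I σ : ℝ → ℝ) (w N : ℝ) : ℝ :=
  2 * I w + 2 * w * σ N

lemma Zfun_eq_partitionFn (a VR VF : ℝ) (I σ : ℝ → ℝ) (w N : ℝ) :
    Zfun a VR VF I σ w N = partitionFn a VR VF (drift I σ w N) := by
  simp only [Zfun, partitionFn, partitionInner, drift, sub_sub]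

section

variable {a VR VF nI σM : ℝ} {I σ S : ℝ → ℝ}

lemma partitionInner_nonneg (c v : ℝ) : 0 ≤ partitionInner a VR VF c v :=
  integral_nonneg fun _ => (exp_pos _).le

lemma partitionInner_pos (hV : VR < VF) (c : ℝ) {v : ℝ} (hv : v < VF) :
    0 < partitionInner a VR VF c v := by
  have : NeZero (volume.restrict (Icc (max VR v) VF)) :=
    ⟨by simp [Measure.restrict_eq_zero, Real.volume_Icc, hV, hv]⟩
  exact integral_exp_pos (Continuous.integrableOn_Icc (by fun_prop))

lemma partitionInner_anti (ha : 0 < a) (v : ℝ) :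
    Antitone fun c => partitionInner a VR VF c v := by
  intro c c' hcc'
  refine setIntegral_mono_on (Continuous.integrableOn_Icc (by fun_prop))
    (Continuous.integrableOn_Icc (by fun_prop)) measurableSet_Icc fun v' hv' => ?_
  have : v ≤ v' := (le_max_right _ _).trans hv'.1
  gcongr

lemma continuous_partitionInner (v : ℝ) : Continuous fun c => partitionInner a VR VF c v :=
  continuous_parametric_integral_of_continuous (by fun_prop) isCompact_Icc

lemma measurable_partitionInner (c : ℝ) : Measurable (partitionInner a VR VF c) := by
  have hind : ∀ v, partitionInner a VR VF c v = ∫ v' in Icc VR VF,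
      (Ici v).indicator (fun v' => exp ((v' - v) * (v' + v - c) / (2 * a))) v' := by
    intro v
    have hset : Ici v ∩ Icc VR VF = Icc (max VR v) VF := by
      ext; simp only [mem_inter_iff, mem_Ici, mem_Icc, max_le_iff]; tauto
    rw [integral_indicator measurableSet_Ici, Measure.restrict_restrict measurableSet_Ici, hset]
    rfl
  simp_rw [funext hind]
  have hjoint : StronglyMeasurable (Function.uncurry fun v v' : ℝ =>
      (Ici v).indicator (fun v' => exp ((v' - v) * (v' + v - c) / (2 * a))) v') := by
    have : (Function.uncurry fun v v' : ℝ =>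
        (Ici v).indicator (fun v' => exp ((v' - v) * (v' + v - c) / (2 * a))) v') =
        {p : ℝ × ℝ | p.1 ≤ p.2}.indicator
          fun p => exp ((p.2 - p.1) * (p.2 + p.1 - c) / (2 * a)) := by
      ext p
      by_cases h : p.1 ≤ p.2 <;> simp [Function.uncurry, h]
    rw [this]
    exact (Measurable.indicator (by fun_prop)
      (measurableSet_le measurable_fst measurable_snd)).stronglyMeasurable
  exact hjoint.integral_prod_right.measurable

-- completing the square: the integrand is `exp ((v' - c/2)^2 / (2a)) * exp (-(v - c/2)^2 / (2a))`
lemma partitionInner_le (ha : 0 < a) (hV : VR ≤ VF) (c v : ℝ) :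
    partitionInner a VR VF c v ≤
      (VF - VR) * exp ((VR ^ 2 + VF ^ 2) / a + c ^ 2 / (4 * a)) *
        exp (-(v - c / 2) ^ 2 / (2 * a)) := by
  have hpt : ∀ v' ∈ Icc VR VF, exp ((v' - v) * (v' + v - c) / (2 * a)) ≤
      exp ((VR ^ 2 + VF ^ 2) / a + c ^ 2 / (4 * a)) * exp (-(v - c / 2) ^ 2 / (2 * a)) := by
    intro v' hv'
    have hv'2 : v' ^ 2 ≤ VR ^ 2 + VF ^ 2 := by
      rcases le_total 0 v' with h | h <;> nlinarith [hv'.1, hv'.2]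
    rw [← exp_add, exp_le_exp]
    calc (v' - v) * (v' + v - c) / (2 * a)
        = (v' - c / 2) ^ 2 / (2 * a) + -(v - c / 2) ^ 2 / (2 * a) := by ring
      _ ≤ (2 * (VR ^ 2 + VF ^ 2) + c ^ 2 / 2) / (2 * a) + -(v - c / 2) ^ 2 / (2 * a) := by
          gcongr
          nlinarith [sq_nonneg (v' + c / 2)]
      _ = _ := by field_simp; ring
  calc partitionInner a VR VF c v
      ≤ ∫ v' in Icc VR VF, exp ((v' - v) * (v' + v - c) / (2 * a)) :=
        setIntegral_mono_set (Continuous.integrableOn_Icc (by fun_prop))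
          (.of_forall fun _ => (exp_pos _).le)
          (Icc_subset_Icc_left (le_max_left _ _)).eventuallyLE
    _ ≤ ∫ _ in Icc VR VF,
          exp ((VR ^ 2 + VF ^ 2) / a + c ^ 2 / (4 * a)) * exp (-(v - c / 2) ^ 2 / (2 * a)) :=
        setIntegral_mono_on (Continuous.integrableOn_Icc (by fun_prop))
          (integrableOn_const (by simp [Real.volume_Icc])) measurableSet_Icc hpt
    _ = _ := by
        rw [setIntegral_const, measureReal_def, Real.volume_Icc,
          ENNReal.toReal_ofReal (by linarith), smul_eq_mul, mul_assoc]

lemma integrableOn_partitionInner (ha : 0 < a) (hV : VR ≤ VF) (c : ℝ) :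
    IntegrableOn (partitionInner a VR VF c) (Iic VF) :=
  Integrable.mono' ((integrable_exp_neg_sq_sub_div ha (c / 2)).const_mul _).integrableOn
    (measurable_partitionInner c).aestronglyMeasurable
    (.of_forall fun v => by
      rw [norm_of_nonneg (partitionInner_nonneg c v)]
      exact partitionInner_le ha hV c v)

lemma partitionFn_nonneg (c : ℝ) : 0 ≤ partitionFn a VR VF c :=
  integral_nonneg fun v => partitionInner_nonneg c v

lemma partitionFn_anti (ha : 0 < a) (hV : VR ≤ VF) : Antitone (partitionFn a VR VF) :=
  fun _ _ hcc' => setIntegral_mono_on (integrableOn_partitionInner ha hV _)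
    (integrableOn_partitionInner ha hV _) measurableSet_Iic
    fun v _ => partitionInner_anti ha v hcc'

lemma partitionFn_pos (ha : 0 < a) (hV : VR < VF) (c : ℝ) : 0 < partitionFn a VR VF c := by
  rw [partitionFn, setIntegral_pos_iff_support_of_nonneg_ae
    (.of_forall fun v => partitionInner_nonneg c v) (integrableOn_partitionInner ha hV.le c)]
  have hsub : Iio VF ⊆ Function.support (partitionInner a VR VF c) ∩ Iic VF :=
    fun v hv => ⟨(partitionInner_pos hV c hv).ne', mem_Iic.2 (le_of_lt hv)⟩
  exact (by simp : 0 < volume (Iio VF)).trans_le (measure_mono hsub)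

lemma continuous_partitionFn (ha : 0 < a) (hV : VR ≤ VF) : Continuous (partitionFn a VR VF) := by
  refine continuous_iff_continuousAt.2 fun c₀ => continuousAt_of_dominated
    (bound := partitionInner a VR VF (c₀ - 1))
    (.of_forall fun c => (measurable_partitionInner c).aestronglyMeasurable) ?_
    (integrableOn_partitionInner ha hV _)
    (.of_forall fun v => (continuous_partitionInner v).continuousAt)
  filter_upwards [eventually_gt_nhds (sub_one_lt c₀)] with c hc
  exact .of_forall fun v => by
    rw [norm_of_nonneg (partitionInner_nonneg c v)]
    exact partitionInner_anti ha v hc.le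

lemma partitionFn_le (ha : 0 < a) (hV : VR ≤ VF) :
    ∃ K, ∀ c, partitionFn a VR VF c ≤ K * exp (c ^ 2 / (4 * a)) := by
  refine ⟨(VF - VR) * exp ((VR ^ 2 + VF ^ 2) / a) * ∫ x, exp (-x ^ 2 / (2 * a)), fun c => ?_⟩
  have hg := (integrable_exp_neg_sq_sub_div ha (c / 2)).const_mul
    ((VF - VR) * exp ((VR ^ 2 + VF ^ 2) / a + c ^ 2 / (4 * a)))
  calc partitionFn a VR VF c
      ≤ ∫ v in Iic VF, (VF - VR) * exp ((VR ^ 2 + VF ^ 2) / a + c ^ 2 / (4 * a)) *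
          exp (-(v - c / 2) ^ 2 / (2 * a)) :=
        setIntegral_mono_on (integrableOn_partitionInner ha hV c) hg.integrableOn
          measurableSet_Iic fun v _ => partitionInner_le ha hV c v
    _ ≤ ∫ v, (VF - VR) * exp ((VR ^ 2 + VF ^ 2) / a + c ^ 2 / (4 * a)) *
          exp (-(v - c / 2) ^ 2 / (2 * a)) :=
        setIntegral_le_integral hg (.of_forall fun _ => by have := sub_nonneg.2 hV; positivity)
    _ = _ := by
        rw [integral_const_mul, integral_sub_right_eq_self (fun x => exp (-x ^ 2 / (2 * a))),
          exp_add]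
        ring

lemma drift_mem_Icc (hI : ∀ x, |I x| ≤ nI) {N : ℝ} (hσ0 : 0 ≤ σ N) (hσM : σ N ≤ σM) (w : ℝ) :
    drift I σ w N ∈ Icc (-(2 * (nI + max (-w) 0 * σM))) (2 * (nI + |w| * σM)) := by
  have hIw := abs_le.1 (hI w)
  rcases le_total 0 w with hw | hw
  · rw [max_eq_right (neg_nonpos.2 hw), abs_of_nonneg hw]
    constructor <;> unfold drift <;> nlinarith
  · rw [max_eq_left (neg_nonneg.2 hw), abs_of_nonpos hw]
    constructor <;> unfold drift <;> nlinarith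

lemma integrable_mul_partitionFn_neg (ha : 0 < a) (hV : VR ≤ VF) (hS0 : ∀ w, 0 ≤ S w)
    (hSint : Integrable S)
    (hSexp : IntegrableOn (fun w => S w * exp ((nI + |w| * σM) ^ 2 / a)) (Iic 0)) :
    Integrable fun w => S w * partitionFn a VR VF (-(2 * (nI + max (-w) 0 * σM))) := by
  obtain ⟨K, hK⟩ := partitionFn_le (VR := VR) (VF := VF) ha hV
  have hmeas : AEStronglyMeasurable
      (fun w => S w * partitionFn a VR VF (-(2 * (nI + max (-w) 0 * σM)))) :=
    hSint.1.mul ((continuous_partitionFn ha hV).comp (by fun_prop)).aestronglyMeasurable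
  rw [← integrableOn_univ, ← Iic_union_Ioi (a := 0), integrableOn_union]
  constructor
  · refine (hSexp.const_mul K).mono' hmeas.restrict
      ((ae_restrict_iff' measurableSet_Iic).2 (.of_forall fun w hw => ?_))
    have hmax : max (-w) 0 = |w| := by rw [abs_of_nonpos hw, max_eq_left (neg_nonneg.2 hw)]
    rw [norm_of_nonneg (mul_nonneg (hS0 w) (partitionFn_nonneg _)), hmax, mul_left_comm]
    gcongr
    · exact hS0 w
    · refine (hK _).trans_eq ?_
      congr 2
      field_simp
      ring
  · refine IntegrableOn.congr_fun (hSint.integrableOn.mul_const (partitionFn a VR VF (-(2 * nI))))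
      (fun w hw => ?_) measurableSet_Ioi
    simp [max_eq_right (neg_nonpos.2 (le_of_lt (mem_Ioi.1 hw)))]

lemma mul_partitionFn_drift_le (ha : 0 < a) (hV : VR ≤ VF) (hI : ∀ x, |I x| ≤ nI) {N : ℝ}
    (hσ0 : 0 ≤ σ N) (hσM : σ N ≤ σM) (hS0 : ∀ w, 0 ≤ S w) (w : ℝ) :
    ‖S w * partitionFn a VR VF (drift I σ w N)‖ ≤
      S w * partitionFn a VR VF (-(2 * (nI + max (-w) 0 * σM))) := by
  rw [norm_of_nonneg (mul_nonneg (hS0 w) (partitionFn_nonneg _))]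
  exact mul_le_mul_of_nonneg_left
    (partitionFn_anti ha hV (drift_mem_Icc hI hσ0 hσM w).1) (hS0 w)

lemma aestronglyMeasurable_mul_partitionFn_drift (ha : 0 < a) (hV : VR ≤ VF)
    (hImeas : Measurable I) (hSint : Integrable S) (N : ℝ) :
    AEStronglyMeasurable fun w => S w * partitionFn a VR VF (drift I σ w N) :=
  hSint.1.mul ((continuous_partitionFn ha hV).measurable.comp
    (by unfold drift; fun_prop)).aestronglyMeasurable

lemma continuousOn_integral_mul_partitionFn_drift (ha : 0 < a) (hV : VR ≤ VF)
    (hσ : Continuous σ) (hσ0 : ∀ N, 0 ≤ N → 0 ≤ σ N) (hσM : ∀ N, 0 ≤ N → σ N ≤ σM)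
    (hImeas : Measurable I) (hI : ∀ x, |I x| ≤ nI) (hS0 : ∀ w, 0 ≤ S w)
    (hSint : Integrable S)
    (hSexp : IntegrableOn (fun w => S w * exp ((nI + |w| * σM) ^ 2 / a)) (Iic 0)) :
    ContinuousOn (fun N => ∫ w, S w * partitionFn a VR VF (drift I σ w N)) (Ici 0) :=
  continuousOn_of_dominated
    (fun N _ => aestronglyMeasurable_mul_partitionFn_drift ha hV hImeas hSint N)
    (fun N hN => .of_forall (mul_partitionFn_drift_le ha hV hI (hσ0 N hN) (hσM N hN) hS0))
    (integrable_mul_partitionFn_neg ha hV hS0 hSint hSexp)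
    (.of_forall fun w => (continuous_const.mul ((continuous_partitionFn ha hV).comp
      (by unfold drift; fun_prop))).continuousOn)

lemma integrable_mul_partitionFn_of_le (ha : 0 < a) (hV : VR ≤ VF) (hS0 : ∀ w, 0 ≤ S w)
    (hSint : Integrable S) {c : ℝ → ℝ} (hc : Measurable c) {c₀ : ℝ} (hc₀ : ∀ w, c₀ ≤ c w) :
    Integrable fun w => S w * partitionFn a VR VF (c w) :=
  (hSint.mul_const (partitionFn a VR VF c₀)).mono'
    (hSint.1.mul ((continuous_partitionFn ha hV).measurable.comp hc).aestronglyMeasurable)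
    (.of_forall fun w => by
      rw [norm_of_nonneg (mul_nonneg (hS0 w) (partitionFn_nonneg _))]
      exact mul_le_mul_of_nonneg_left (partitionFn_anti ha hV (hc₀ w)) (hS0 w))

lemma integral_mul_partitionFn_pos (ha : 0 < a) (hV : VR < VF) (hS0 : ∀ w, 0 ≤ S w)
    (hSint : Integrable S) (hS : 0 < ∫ w, S w) {c : ℝ → ℝ} (hc : Measurable c) {c₀ : ℝ}
    (hc₀ : ∀ w, c₀ ≤ c w) : 0 < ∫ w, S w * partitionFn a VR VF (c w) := by
  rw [integral_pos_iff_support_of_nonneg (fun w => mul_nonneg (hS0 w) (partitionFn_nonneg _))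
      (integrable_mul_partitionFn_of_le ha hV.le hS0 hSint hc hc₀),
    Function.support_mul_of_ne_zero_right _ fun w => (partitionFn_pos ha hV (c w)).ne']
  exact (integral_pos_iff_support_of_nonneg hS0 hSint).1 hS

lemma integral_mul_partitionFn_le_drift (ha : 0 < a) (hV : VR ≤ VF) (hImeas : Measurable I)
    (hI : ∀ x, |I x| ≤ nI) (hnI : 0 ≤ nI) (hσM0 : 0 ≤ σM) {N : ℝ} (hσ0 : 0 ≤ σ N)
    (hσM : σ N ≤ σM) (hS0 : ∀ w, 0 ≤ S w) (hSint : Integrable S)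
    (hSexp : IntegrableOn (fun w => S w * exp ((nI + |w| * σM) ^ 2 / a)) (Iic 0)) :
    ∫ w, S w * partitionFn a VR VF (2 * (nI + |w| * σM)) ≤
      ∫ w, S w * partitionFn a VR VF (drift I σ w N) :=
  integral_mono
    (integrable_mul_partitionFn_of_le ha hV hS0 hSint (by fun_prop) (c₀ := 0)
      fun w => by positivity)
    ((integrable_mul_partitionFn_neg ha hV hS0 hSint hSexp).mono'
      (aestronglyMeasurable_mul_partitionFn_drift ha hV hImeas hSint N)
      (.of_forall (mul_partitionFn_drift_le ha hV hI hσ0 hσM hS0)))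
    fun w => mul_le_mul_of_nonneg_left
      (partitionFn_anti ha hV (drift_mem_Icc hI hσ0 hσM w).2) (hS0 w)

end

theorem stmt12_general (a VR VF : ℝ) (ha : 0 < a) (hV : VR < VF)
    (σ : ℝ → ℝ) (hσC2 : ContDiff ℝ 2 σ) (hσ0 : ∀ N, 0 ≤ N → 0 ≤ σ N)
    (σM : ℝ) (hσM : ∀ N, 0 ≤ N → σ N ≤ σM)
    (I : ℝ → ℝ) (hImeas : Measurable I) (nI : ℝ) (hI : ∀ x, |I x| ≤ nI)
    (S : ℝ → ℝ) (hS0 : ∀ w, 0 ≤ S w)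
    (hSint : Integrable S) (hS1 : (∫ w, S w) = 1)
    (hSexp : IntegrableOn (fun w => S w * Real.exp ((nI + |w| * σM) ^ 2 / a))
      (Set.Iic 0)) :
    ∃ N > 0,
      N * (∫ w, S w * Zfun a VR VF I σ w N) = a ∧
      (∫ w, N / a * Zfun a VR VF I σ w N * S w) = 1 ∧
      (∀ w, N * S w =
        a * (N / a * Zfun a VR VF I σ w N * S w) / Zfun a VR VF I σ w N) ∧
      a * (∫ w, (N / a * Zfun a VR VF I σ w N * S w) / Zfun a VR VF I σ w N) = N := by
  have hnI : 0 ≤ nI := (abs_nonneg _).trans (hI 0)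
  have hσM0 : 0 ≤ σM := (hσ0 0 le_rfl).trans (hσM 0 le_rfl)
  obtain ⟨N, hN, hNa⟩ := exists_pos_mul_eq_of_le
    (continuousOn_integral_mul_partitionFn_drift ha hV.le hσC2.continuous hσ0 hσM hImeas hI hS0
      hSint hSexp)
    (integral_mul_partitionFn_pos ha hV hS0 hSint (hS1 ▸ one_pos) (by fun_prop) (c₀ := 0)
      fun w => by positivity)
    (fun N hN => integral_mul_partitionFn_le_drift ha hV.le hImeas hI hnI hσM0 (hσ0 N hN)
      (hσM N hN) hS0 hSint hSexp) ha
  have hZ : ∀ w, Zfun a VR VF I σ w N ≠ 0 := fun w =>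
    (Zfun_eq_partitionFn .. ▸ partitionFn_pos ha hV _).ne'
  simp_rw [← Zfun_eq_partitionFn] at hNa
  refine ⟨N, hN, hNa, ?_, fun w => by field_simp [hZ w], ?_⟩
  · simp_rw [mul_assoc, mul_comm _ (S _), integral_const_mul]
    field_simp
    linarith
  · have hcancel : ∀ w,
        N / a * Zfun a VR VF I σ w N * S w / Zfun a VR VF I σ w N = N / a * S w :=
      fun w => by field_simp [hZ w]
    simp_rw [hcancel, integral_const_mul, hS1]
    field_simp

/-- Realization of a prescribed output signal (Theorem 4.1, existence part): there is
`N̄ > 0` with `N̄ ∫ S Z_{N̄,I} = a`; then `H = (N̄/a) Z_{N̄,I} S` is a probability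
density whose stationary state has normalized output signal `S`. -/
theorem stmt12 (a VR VF : ℝ) (ha : 0 < a) (hV : VR < VF)
    (σ : ℝ → ℝ) (hσC2 : ContDiff ℝ 2 σ) (hσ0 : ∀ N, 0 ≤ N → 0 ≤ σ N)
    (hσ' : ∀ N, 0 ≤ N → 0 ≤ deriv σ N)
    (σM : ℝ) (hσM : ∀ N, 0 ≤ N → σ N ≤ σM)
    (I : ℝ → ℝ) (hImeas : Measurable I) (nI : ℝ) (hI : ∀ x, |I x| ≤ nI)
    (S : ℝ → ℝ) (hSmeas : Measurable S) (hS0 : ∀ w, 0 ≤ S w)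
    (hSint : Integrable S) (hS1 : (∫ w, S w) = 1)
    (hSexp : IntegrableOn (fun w => S w * Real.exp ((nI + |w| * σM) ^ 2 / a))
      (Set.Iic 0)) :
    ∃ N > 0,
      N * (∫ w, S w * Zfun a VR VF I σ w N) = a ∧
      (∫ w, N / a * Zfun a VR VF I σ w N * S w) = 1 ∧
      (∀ w, N * S w =
        a * (N / a * Zfun a VR VF I σ w N * S w) / Zfun a VR VF I σ w N) ∧
      a * (∫ w, (N / a * Zfun a VR VF I σ w N * S w) / Zfun a VR VF I σ w N) = N :=
  stmt12_general a VR VF ha hV σ hσC2 hσ0 σM hσM I hImeas nI hI S hS0 hSint hS1 hSexp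
end

section
/- Existence of an inhibitory steady state under the learning rule (Proposition 6.2, existence part): assume σ : [0,∞) → [0,∞) is of class C² with σ' ≥ 0, let I : ℝ → ℝ be bounded measurable, and let K : (−∞,0) → ℝ be continuous with K(w) < 0 and K_m ≤ |K(w)| ≤ K_M for all w < 0 (0 < K_m ≤ K_M). For N̄ ≥ 0 let φ(N̄) ≥ 0 be the unique number with N̄² = ∫_{−φ(N̄)}^{0} (w/K(w)) dw, and define Φ(N̄) = ∫_{−φ(N̄)}^{0} (w/K(w)) · Z_{N̄,I}(w) dw. Then there exists N̄ > 0 such that Φ(N̄) = a N̄. -/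
/-!
With `G t = ∫_{-t}^0 w / K w dw`, strictly increasing on `[0, ∞)`, the relation `N² = G (φ N)`
makes `φ` monotone, and since it maps `(0, ∞)` onto `(0, ∞)` it is continuous there.
`Z_{N,I}(w) = g (2 I(w) + 2 w σ(N))` for a positive, continuous, antitone `g`, and on the
integration range the argument of `g` is bounded above by `2 sup |I|` and, for `N ≤ 1`, below by
`-2 sup |I| - 2 φ(1) max_{[0,1]} σ`. Hence `Φ(N)` is squeezed between two positive multiples of
`G (φ N) = N²`: `Φ(N) < a N` for small `N` and `Φ(N) > a N` for large `N`. Dominated convergence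
makes `Φ` continuous on `(0, ∞)`, and the intermediate value theorem produces the steady state.
-/

open MeasureTheory Real Set Filter

open Topology

noncomputable def lifKernel (a b v v' : ℝ) : ℝ := exp ((v' - v) * (v' + v - b) / (2 * a))

noncomputable def lifInner (a VR VF b v : ℝ) : ℝ :=
  ∫ v' in Icc (max VR v) VF, lifKernel a b v v'

noncomputable def lifPartition (a VR VF b : ℝ) : ℝ := ∫ v in Iic VF, lifInner a VR VF b v

theorem Zfun_eq_lifPartition (a VR VF : ℝ) (I σ : ℝ → ℝ) (w N : ℝ) :
    Zfun a VR VF I σ w N = lifPartition a VR VF (2 * I w + 2 * w * σ N) := by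
  simp only [Zfun, lifPartition, lifInner, lifKernel, sub_sub]

section LifPartition

variable {a VR VF : ℝ}

theorem lifKernel_le (ha : 0 < a) {b v v' R M : ℝ} (hb : |b| ≤ R) (hv' : |v'| ≤ M) :
    lifKernel a b v v' ≤
      exp (((M + R / 2) ^ 2 + R ^ 2 / 4) / (2 * a)) * exp (-v ^ 2 / (4 * a)) := by
  rw [lifKernel, ← exp_add, exp_le_exp]
  have hR := (abs_nonneg b).trans hb
  have hv'b : (v' - b / 2) ^ 2 ≤ (M + R / 2) ^ 2 := by
    rw [abs_le] at hb hv'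
    nlinarith
  -- `(v' - v)(v' + v - b) = (v' - b/2)² - (v - b/2)²`, and `(v - b/2)² ≥ v²/2 - b²/4`
  have hvb : v ^ 2 / 2 - R ^ 2 / 4 ≤ (v - b / 2) ^ 2 := by
    nlinarith [sq_nonneg (v - b), sq_abs b, mul_le_mul hb hb (abs_nonneg b) hR]
  rw [show -v ^ 2 / (4 * a) = (-(v ^ 2 / 2)) / (2 * a) by field_simp; ring, ← add_div]
  gcongr
  nlinarith

theorem lifInner_nonneg (a VR VF b v : ℝ) : 0 ≤ lifInner a VR VF b v :=
  setIntegral_nonneg measurableSet_Icc fun _ _ => (exp_pos _).le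

theorem exists_lifInner_le (ha : 0 < a) (VR VF R : ℝ) :
    ∃ C, ∀ b, |b| ≤ R → ∀ v, lifInner a VR VF b v ≤ C * exp (-v ^ 2 / (4 * a)) := by
  set c := exp (((max |VR| |VF| + R / 2) ^ 2 + R ^ 2 / 4) / (2 * a))
  refine ⟨volume.real (Icc VR VF) * c, fun b hb v => ?_⟩
  calc lifInner a VR VF b v ≤ ∫ _ in Icc (max VR v) VF, c * exp (-v ^ 2 / (4 * a)) := by
        refine setIntegral_mono_on ?_ (integrableOn_const measure_Icc_lt_top.ne)
          measurableSet_Icc fun v' hv' => lifKernel_le ha hb ?_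
        · exact (by unfold lifKernel; fun_prop : Continuous (lifKernel a b v)).integrableOn_Icc
        · exact abs_le_max_abs_abs ((le_max_left VR v).trans hv'.1) hv'.2
    _ ≤ ∫ _ in Icc VR VF, c * exp (-v ^ 2 / (4 * a)) :=
        setIntegral_mono_set (integrableOn_const measure_Icc_lt_top.ne)
          (ae_of_all _ fun _ => by positivity)
          (Icc_subset_Icc_left (le_max_left VR v)).eventuallyLE
    _ = volume.real (Icc VR VF) * c * exp (-v ^ 2 / (4 * a)) := by
        rw [setIntegral_const, smul_eq_mul, mul_assoc]

theorem lifInner_eq_intervalIntegral (a VR VF b v : ℝ) :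
    lifInner a VR VF b v =
      ∫ t in (max VR v)..(max (max VR v) VF), lifKernel a b v t := by
  rw [lifInner, intervalIntegral.integral_of_le (le_max_left _ _)]
  rcases le_or_gt (max VR v) VF with h | h
  · rw [max_eq_right h, integral_Icc_eq_integral_Ioc]
  · rw [max_eq_left h.le, Icc_eq_empty_of_lt h, Ioc_self]

theorem continuous_lifInner (a VR VF : ℝ) :
    Continuous fun p : ℝ × ℝ => lifInner a VR VF p.1 p.2 := by
  simp_rw [lifInner_eq_intervalIntegral]
  have hk : Continuous fun q : (ℝ × ℝ) × ℝ => lifKernel a q.1.1 q.1.2 q.2 := by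
    unfold lifKernel; fun_prop
  have hprim (s : ℝ × ℝ → ℝ) (hs : Continuous s) :
      Continuous fun p => ∫ t in 0..s p, lifKernel a p.1 p.2 t :=
    intervalIntegral.continuous_parametric_intervalIntegral_of_continuous
      (f := fun (p : ℝ × ℝ) t => lifKernel a p.1 p.2 t) hk hs
  refine ((hprim _ (by fun_prop : Continuous fun p : ℝ × ℝ => max (max VR p.2) VF)).sub
    (hprim _ (by fun_prop : Continuous fun p : ℝ × ℝ => max VR p.2))).congr fun p => ?_
  have hp : Continuous (lifKernel a p.1 p.2) := by unfold lifKernel; fun_prop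
  exact intervalIntegral.integral_interval_sub_left (hp.intervalIntegrable _ _)
    (hp.intervalIntegrable _ _)

theorem integrable_exp_neg_sq_div {c : ℝ} (hc : 0 < c) :
    Integrable fun x : ℝ => exp (-x ^ 2 / c) := by
  convert integrable_exp_neg_mul_sq (inv_pos.2 hc) using 3
  ring

theorem integrable_lifInner (ha : 0 < a) (VR VF b : ℝ) : Integrable (lifInner a VR VF b) := by
  obtain ⟨C, hC⟩ := exists_lifInner_le ha VR VF |b|
  have hexp := integrable_exp_neg_sq_div (by positivity : 0 < 4 * a)
  refine Integrable.mono' (hexp.const_mul C)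
    ((continuous_lifInner a VR VF).comp₂ continuous_const continuous_id).aestronglyMeasurable
    (ae_of_all _ fun v => ?_)
  rw [norm_of_nonneg (lifInner_nonneg ..)]
  exact hC b le_rfl v

theorem continuous_lifPartition (ha : 0 < a) (VR VF : ℝ) :
    Continuous (lifPartition a VR VF) := by
  refine continuous_iff_continuousAt.2 fun b₀ => ?_
  obtain ⟨C, hC⟩ := exists_lifInner_le ha VR VF (|b₀| + 1)
  refine continuousAt_of_dominated (bound := fun v => C * exp (-v ^ 2 / (4 * a)))
    (Eventually.of_forall fun b => ?_) ?_ ?_ (ae_of_all _ fun v => ?_)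
  · exact ((continuous_lifInner a VR VF).comp₂ continuous_const
      continuous_id).aestronglyMeasurable
  · filter_upwards [(continuous_abs.tendsto b₀).eventually_le_const (lt_add_one |b₀|)] with b hb
    refine ae_of_all _ fun v => ?_
    rw [norm_of_nonneg (lifInner_nonneg ..)]
    exact hC b hb v
  · exact ((integrable_exp_neg_sq_div (by positivity : 0 < 4 * a)).const_mul C).integrableOn
  · exact ((continuous_lifInner a VR VF).comp₂ continuous_id continuous_const).continuousAt

theorem antitone_lifPartition (ha : 0 < a) (VR VF : ℝ) : Antitone (lifPartition a VR VF) := by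
  intro b b' hbb'
  refine setIntegral_mono (integrable_lifInner ha VR VF b').integrableOn
    (integrable_lifInner ha VR VF b).integrableOn fun v => ?_
  refine setIntegral_mono_on ?_ ?_ measurableSet_Icc fun v' hv' => ?_
  · exact (by unfold lifKernel; fun_prop : Continuous (lifKernel a b' v)).integrableOn_Icc
  · exact (by unfold lifKernel; fun_prop : Continuous (lifKernel a b v)).integrableOn_Icc
  have hvv' : v ≤ v' := (le_max_right VR v).trans hv'.1
  unfold lifKernel
  gcongr

theorem lifPartition_pos (ha : 0 < a) (hV : VR < VF) (b : ℝ) : 0 < lifPartition a VR VF b := by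
  have hinner : ∀ v < VF, 0 < lifInner a VR VF b v := fun v hv => by
    rw [lifInner_eq_intervalIntegral, max_eq_right (max_lt hV hv).le]
    exact intervalIntegral.intervalIntegral_pos_of_pos_on
      ((by unfold lifKernel; fun_prop : Continuous (lifKernel a b v)).intervalIntegrable _ _)
      (fun _ _ => exp_pos _) (max_lt hV hv)
  rw [lifPartition, setIntegral_pos_iff_support_of_nonneg_ae
    (ae_of_all _ (lifInner_nonneg a VR VF b)) (integrable_lifInner ha VR VF b).integrableOn]
  have hsub : Iio VF ⊆ Function.support (lifInner a VR VF b) ∩ Iic VF :=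
    fun v hv => ⟨(hinner v hv).ne', mem_Iic.2 (le_of_lt hv)⟩
  refine lt_of_lt_of_le ?_ (measure_mono hsub)
  simp

end LifPartition

theorem ContinuousOn.aestronglyMeasurable_Ioc {f : ℝ → ℝ} {d : ℝ}
    (hf : ContinuousOn f (Iio d)) (c : ℝ) : AEStronglyMeasurable f (volume.restrict (Ioc c d)) := by
  rw [← Measure.restrict_congr_set Ioo_ae_eq_Ioc]
  exact (hf.mono Ioo_subset_Iio_self).aestronglyMeasurable measurableSet_Ioo

section Weight

variable {K : ℝ → ℝ} {Km : ℝ}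

theorem div_apply_nonneg_of_nonpos {w : ℝ} (hKneg : ∀ w < 0, K w < 0) (hw : w ≤ 0) :
    0 ≤ w / K w := by
  rcases hw.lt_or_eq with hw | rfl
  · exact div_nonneg_of_nonpos hw.le (hKneg w hw).le
  · simp

theorem abs_div_apply_le (hKm : 0 < Km) (hKbd : ∀ w < 0, Km ≤ |K w|) {B w : ℝ}
    (hw : w ∈ Ioc (-B) 0) : |w / K w| ≤ B / Km := by
  rcases hw.2.lt_or_eq with hw0 | rfl
  · rw [abs_div, abs_of_neg hw0]
    exact div_le_div₀ (by linarith [hw.1]) (by linarith [hw.1]) hKm (hKbd w hw0)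
  · simpa using div_nonneg (neg_nonpos.1 hw.1.le) hKm.le

theorem integrableOn_div_apply (hKcont : ContinuousOn K (Iio 0)) (hKneg : ∀ w < 0, K w < 0)
    (hKm : 0 < Km) (hKbd : ∀ w < 0, Km ≤ |K w|) (B : ℝ) :
    IntegrableOn (fun w => w / K w) (Ioc (-B) 0) :=
  IntegrableOn.of_bound measure_Ioc_lt_top
    ((continuousOn_id.div hKcont fun w hw => (hKneg w hw).ne).aestronglyMeasurable_Ioc _)
    (B / Km)
    ((ae_restrict_mem measurableSet_Ioc).mono fun _ hw => abs_div_apply_le hKm hKbd hw)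

end Weight

theorem strictMonoOn_setIntegral_Ioc_neg {q : ℝ → ℝ} (hq : ∀ t, IntegrableOn q (Ioc (-t) 0))
    (hq_pos : ∀ w < 0, 0 < q w) : StrictMonoOn (fun t => ∫ w in Ioc (-t) 0, q w) (Ici 0) := by
  intro s hs t ht hst
  simp only [mem_Ici] at hs ht
  have hii {c d : ℝ} (hcd : c ≤ d) (hd : d ≤ 0) : IntervalIntegrable q volume c d :=
    (intervalIntegrable_iff_integrableOn_Ioc_of_le hcd).2
      ((neg_neg c ▸ hq (-c)).mono_set (Ioc_subset_Ioc_right hd))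
  simp only [← intervalIntegral.integral_of_le (neg_nonpos.2 hs),
    ← intervalIntegral.integral_of_le (neg_nonpos.2 ht)]
  rw [← intervalIntegral.integral_add_adjacent_intervals (a := -t) (b := -s)
    (hii (by linarith) (by linarith)) (hii (by linarith) le_rfl)]
  have := intervalIntegral.intervalIntegral_pos_of_pos_on (hii (by linarith) (by linarith))
    (fun w hw => hq_pos w (by linarith [hw.2])) (neg_lt_neg hst)
  linarith

section ImplicitInverse

variable {G φ : ℝ → ℝ}

theorem monotoneOn_of_strictMonoOn_comp_eq_sq (hG : StrictMonoOn G (Ici 0))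
    (hφ : ∀ N, 0 ≤ N → 0 ≤ φ N ∧ N ^ 2 = G (φ N)) : MonotoneOn φ (Ici 0) := by
  intro N hN N' hN' hNN'
  rw [← hG.le_iff_le (hφ N hN).1 (hφ N' hN').1, ← (hφ N hN).2, ← (hφ N' hN').2]
  exact pow_le_pow_left₀ hN hNN' 2

theorem continuousAt_of_strictMonoOn_comp_eq_sq (hG : StrictMonoOn G (Ici 0)) (hG0 : G 0 = 0)
    (hφ : ∀ N, 0 ≤ N → 0 ≤ φ N ∧ N ^ 2 = G (φ N)) {N : ℝ} (hN : 0 < N) : ContinuousAt φ N := by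
  have hφN : 0 < φ N := (hφ N hN.le).1.lt_of_ne fun h => by
    have := (hφ N hN.le).2
    rw [← h, hG0] at this
    exact (pow_pos hN 2).ne' this
  have hsurj : Ioi 0 ⊆ φ '' Ioi 0 := fun t ht => by
    have hGt : 0 < G t := hG0 ▸ hG self_mem_Ici (mem_Ici.2 ht.le) ht
    refine ⟨√(G t), sqrt_pos.2 hGt, hG.injOn (hφ _ (sqrt_nonneg _)).1 (mem_Ici.2 ht.le) ?_⟩
    rw [← (hφ _ (sqrt_nonneg _)).2, sq_sqrt hGt.le]
  exact continuousAt_of_monotoneOn_of_image_mem_nhds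
    ((monotoneOn_of_strictMonoOn_comp_eq_sq hG hφ).mono Ioi_subset_Ici_self) (Ioi_mem_nhds hN)
    (mem_of_superset (Ioi_mem_nhds hφN) hsurj)

end ImplicitInverse

theorem continuousAt_setIntegral_Ioc {f : ℝ → ℝ → ℝ} {u : ℝ → ℝ} {x₀ c d C : ℝ}
    (hu : ContinuousAt u x₀) (hc : c < u x₀)
    (hf_meas : ∀ᶠ x in 𝓝 x₀, AEStronglyMeasurable (f x) (volume.restrict (Ioc c d)))
    (hf_bound : ∀ᶠ x in 𝓝 x₀, ∀ w ∈ Ioc c d, ‖f x w‖ ≤ C)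
    (hf_cont : ∀ w ∈ Ioc c d, ContinuousAt (fun x => f x w) x₀) :
    ContinuousAt (fun x => ∫ w in Ioc (u x) d, f x w) x₀ := by
  have hind {x : ℝ} (hx : c ≤ u x) :
      ∫ w in Ioc (u x) d, f x w = ∫ w in Ioc c d, (Ioc (u x) d).indicator (f x) w := by
    rw [setIntegral_indicator measurableSet_Ioc, Ioc_inter_Ioc, max_eq_right hx, min_self]
  have hc_ev : ∀ᶠ x in 𝓝 x₀, c ≤ u x := (hu.eventually (lt_mem_nhds hc)).mono fun _ h => h.le
  show Tendsto _ _ (𝓝 (∫ w in Ioc (u x₀) d, f x₀ w))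
  rw [hind hc.le, tendsto_congr' (hc_ev.mono fun x hx => hind hx)]
  refine tendsto_integral_filter_of_dominated_convergence (fun _ => C)
    (hf_meas.mono fun x hx => hx.indicator measurableSet_Ioc)
    (hf_bound.mono fun x hx => (ae_restrict_mem measurableSet_Ioc).mono fun w hw =>
      (norm_indicator_le_norm_self _ _).trans (hx w hw))
    (integrable_const C) ?_
  filter_upwards [ae_restrict_mem measurableSet_Ioc,
    ae_restrict_of_ae (Measure.ae_ne volume (u x₀))] with w hw hne
  have hmem : ∀ᶠ x in 𝓝 x₀, (w ∈ Ioc (u x) d ↔ w ∈ Ioc (u x₀) d) := by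
    rcases hne.lt_or_gt with h | h
    · filter_upwards [hu.eventually (lt_mem_nhds h)] with x hx
      simp only [mem_Ioc]
      constructor <;> intro h' <;> linarith [h'.1]
    · filter_upwards [hu.eventually (gt_mem_nhds h)] with x hx
      simp only [mem_Ioc, hx, h, true_and]
  by_cases hw₀ : w ∈ Ioc (u x₀) d
  · rw [indicator_of_mem hw₀]
    refine (tendsto_congr' ?_).2 (hf_cont w hw)
    filter_upwards [hmem] with x hx
    exact indicator_of_mem (hx.2 hw₀) _
  · rw [indicator_of_notMem hw₀]
    refine (tendsto_congr' ?_).2 tendsto_const_nhds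
    filter_upwards [hmem] with x hx
    exact indicator_of_notMem (mt hx.1 hw₀) _

theorem exists_pos_eq_mul_of_sq_bounds {f : ℝ → ℝ} {a m M : ℝ} (ha : 0 < a) (hm : 0 < m)
    (hM : 0 < M) (hf : ∀ N > 0, ContinuousAt f N) (hlow : ∀ N > 0, m * N ^ 2 ≤ f N)
    (hup : ∀ N ∈ Ioc 0 1, f N ≤ M * N ^ 2) : ∃ N > 0, f N = a * N := by
  set N₁ := min 1 (a / M)
  set N₂ := max N₁ (a / m)
  have hN₁ : 0 < N₁ := lt_min one_pos (div_pos ha hM)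
  have hN₁₂ : N₁ ≤ N₂ := le_max_left _ _
  have hf₁ : f N₁ ≤ a * N₁ := by
    have : M * N₁ ≤ a := (le_div_iff₀' hM).1 (min_le_right _ _)
    nlinarith [hup N₁ ⟨hN₁, min_le_left _ _⟩]
  have hf₂ : a * N₂ ≤ f N₂ := by
    have : a ≤ m * N₂ := (div_le_iff₀' hm).1 (le_max_right _ _)
    nlinarith [hlow N₂ (hN₁.trans_le hN₁₂)]
  have hcont : ContinuousOn (fun N => f N - a * N) (Icc N₁ N₂) := fun N hN =>
    ((hf N (hN₁.trans_le hN.1)).sub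
      (continuousAt_const.mul continuousAt_id)).continuousWithinAt
  obtain ⟨N, hN, hN0⟩ := intermediate_value_Icc hN₁₂ hcont
    (show (0 : ℝ) ∈ Icc (f N₁ - a * N₁) (f N₂ - a * N₂) from ⟨by linarith, by linarith⟩)
  exact ⟨N, hN₁.trans_le hN.1, sub_eq_zero.1 hN0⟩

noncomputable def Phi (a VR VF : ℝ) (I σ K φ : ℝ → ℝ) (N : ℝ) : ℝ :=
  ∫ w in Ioc (-φ N) 0, (w / K w) * Zfun a VR VF I σ w N

section Phi

variable {a VR VF nI Km : ℝ} {I σ K φ : ℝ → ℝ}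

theorem lifPartition_le_Zfun (ha : 0 < a) (hI : ∀ x, |I x| ≤ nI) {w N : ℝ} (hw : w ≤ 0)
    (hσN : 0 ≤ σ N) : lifPartition a VR VF (2 * nI) ≤ Zfun a VR VF I σ w N := by
  rw [Zfun_eq_lifPartition]
  refine antitone_lifPartition ha VR VF ?_
  nlinarith [(abs_le.1 (hI w)).2]

theorem Zfun_le_lifPartition (ha : 0 < a) (hI : ∀ x, |I x| ≤ nI) {w N B S : ℝ}
    (hw : w ∈ Ioc (-B) 0) (hσN : σ N ∈ Icc 0 S) :
    Zfun a VR VF I σ w N ≤ lifPartition a VR VF (-(2 * nI) - 2 * B * S) := by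
  rw [Zfun_eq_lifPartition]
  refine antitone_lifPartition ha VR VF ?_
  nlinarith [(abs_le.1 (hI w)).1, hw.1, hw.2, hσN.1, hσN.2]

theorem Zfun_nonneg (a VR VF : ℝ) (I σ : ℝ → ℝ) (w N : ℝ) : 0 ≤ Zfun a VR VF I σ w N :=
  setIntegral_nonneg measurableSet_Iic fun _ _ =>
    setIntegral_nonneg measurableSet_Icc fun _ _ => (exp_pos _).le

theorem measurable_Zfun (ha : 0 < a) (hImeas : Measurable I) (N : ℝ) :
    Measurable fun w => Zfun a VR VF I σ w N := by
  simp only [Zfun_eq_lifPartition]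
  exact (continuous_lifPartition ha VR VF).measurable.comp (by fun_prop)

theorem continuous_Zfun (ha : 0 < a) (hσ : Continuous σ) (w : ℝ) :
    Continuous fun N => Zfun a VR VF I σ w N := by
  simp only [Zfun_eq_lifPartition]
  exact (continuous_lifPartition ha VR VF).comp (by fun_prop)

theorem aestronglyMeasurable_integrand (ha : 0 < a) (hImeas : Measurable I)
    (hKcont : ContinuousOn K (Iio 0)) (hKneg : ∀ w < 0, K w < 0) (B N : ℝ) :
    AEStronglyMeasurable (fun w => w / K w * Zfun a VR VF I σ w N)
      (volume.restrict (Ioc (-B) 0)) :=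
  ((continuousOn_id.div hKcont fun w hw => (hKneg w hw).ne).aestronglyMeasurable_Ioc _).mul
    (measurable_Zfun ha hImeas N).aestronglyMeasurable

theorem norm_integrand_le (ha : 0 < a) (hI : ∀ x, |I x| ≤ nI) (hKm : 0 < Km)
    (hKbd : ∀ w < 0, Km ≤ |K w|) {w N B S : ℝ} (hw : w ∈ Ioc (-B) 0) (hσN : σ N ∈ Icc 0 S) :
    ‖w / K w * Zfun a VR VF I σ w N‖ ≤
      B / Km * lifPartition a VR VF (-(2 * nI) - 2 * B * S) := by
  have hB : 0 ≤ B := by linarith [hw.1, hw.2]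
  rw [norm_mul, norm_eq_abs, norm_of_nonneg (Zfun_nonneg ..)]
  exact mul_le_mul (abs_div_apply_le hKm hKbd hw) (Zfun_le_lifPartition ha hI hw hσN)
    (Zfun_nonneg ..) (div_nonneg hB hKm.le)

theorem integrableOn_integrand (ha : 0 < a) (hI : ∀ x, |I x| ≤ nI) (hImeas : Measurable I)
    (hKcont : ContinuousOn K (Iio 0)) (hKneg : ∀ w < 0, K w < 0) (hKm : 0 < Km)
    (hKbd : ∀ w < 0, Km ≤ |K w|) (B : ℝ) {N : ℝ} (hσN : 0 ≤ σ N) :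
    IntegrableOn (fun w => w / K w * Zfun a VR VF I σ w N) (Ioc (-B) 0) :=
  IntegrableOn.of_bound measure_Ioc_lt_top
    (aestronglyMeasurable_integrand ha hImeas hKcont hKneg B N) _
    ((ae_restrict_mem measurableSet_Ioc).mono fun _ hw =>
      norm_integrand_le ha hI hKm hKbd hw ⟨hσN, le_rfl⟩)

theorem mul_sq_le_Phi (ha : 0 < a) (hI : ∀ x, |I x| ≤ nI) (hImeas : Measurable I)
    (hKcont : ContinuousOn K (Iio 0)) (hKneg : ∀ w < 0, K w < 0) (hKm : 0 < Km)
    (hKbd : ∀ w < 0, Km ≤ |K w|) (hσ0 : ∀ N, 0 ≤ N → 0 ≤ σ N)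
    (hφ : ∀ N, 0 ≤ N → 0 ≤ φ N ∧ N ^ 2 = ∫ w in Ioc (-φ N) 0, w / K w) {N : ℝ} (hN : 0 ≤ N) :
    lifPartition a VR VF (2 * nI) * N ^ 2 ≤ Phi a VR VF I σ K φ N := by
  rw [(hφ N hN).2, ← integral_const_mul]
  refine setIntegral_mono_on ((integrableOn_div_apply hKcont hKneg hKm hKbd _).const_mul _)
    (integrableOn_integrand ha hI hImeas hKcont hKneg hKm hKbd _ (hσ0 N hN)) measurableSet_Ioc
    fun w hw => ?_
  rw [mul_comm]
  exact mul_le_mul_of_nonneg_left (lifPartition_le_Zfun ha hI hw.2 (hσ0 N hN))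
    (div_apply_nonneg_of_nonpos hKneg hw.2)

theorem exists_Phi_le_mul_sq (ha : 0 < a) (hI : ∀ x, |I x| ≤ nI) (hImeas : Measurable I)
    (hKcont : ContinuousOn K (Iio 0)) (hKneg : ∀ w < 0, K w < 0) (hKm : 0 < Km)
    (hKbd : ∀ w < 0, Km ≤ |K w|) (hσ : Continuous σ) (hσ0 : ∀ N, 0 ≤ N → 0 ≤ σ N)
    (hφ : ∀ N, 0 ≤ N → 0 ≤ φ N ∧ N ^ 2 = ∫ w in Ioc (-φ N) 0, w / K w)
    (hφ_mono : MonotoneOn φ (Ici 0)) :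
    ∃ S, ∀ N ∈ Ioc 0 1,
      Phi a VR VF I σ K φ N ≤ lifPartition a VR VF (-(2 * nI) - 2 * φ 1 * S) * N ^ 2 := by
  obtain ⟨S, hS⟩ := isCompact_Icc.exists_bound_of_continuousOn (hσ.continuousOn (s := Icc 0 1))
  refine ⟨S, fun N hN => ?_⟩
  have hσN : σ N ∈ Icc 0 S :=
    ⟨hσ0 N hN.1.le, (le_abs_self _).trans (hS N (Ioc_subset_Icc_self hN))⟩
  have hφN : φ N ≤ φ 1 := hφ_mono (mem_Ici.2 hN.1.le) (mem_Ici.2 zero_le_one) hN.2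
  rw [(hφ N hN.1.le).2, ← integral_const_mul]
  refine setIntegral_mono_on
    (integrableOn_integrand ha hI hImeas hKcont hKneg hKm hKbd _ hσN.1)
    ((integrableOn_div_apply hKcont hKneg hKm hKbd _).const_mul _) measurableSet_Ioc
    fun w hw => ?_
  rw [mul_comm (lifPartition ..)]
  exact mul_le_mul_of_nonneg_left (Zfun_le_lifPartition ha hI ⟨by linarith [hw.1], hw.2⟩ hσN)
    (div_apply_nonneg_of_nonpos hKneg hw.2)

theorem continuousAt_Phi (ha : 0 < a) (hI : ∀ x, |I x| ≤ nI) (hImeas : Measurable I)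
    (hKcont : ContinuousOn K (Iio 0)) (hKneg : ∀ w < 0, K w < 0) (hKm : 0 < Km)
    (hKbd : ∀ w < 0, Km ≤ |K w|) (hσ : Continuous σ) (hσ0 : ∀ N, 0 ≤ N → 0 ≤ σ N)
    {N₀ : ℝ} (hN₀ : 0 < N₀) (hφ : ContinuousAt φ N₀) :
    ContinuousAt (Phi a VR VF I σ K φ) N₀ := by
  have hσ_ev : ∀ᶠ N in 𝓝 N₀, σ N ∈ Icc 0 (σ N₀ + 1) := by
    filter_upwards [lt_mem_nhds hN₀, hσ.continuousAt.eventually (gt_mem_nhds (lt_add_one _))]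
      with N hN hσN
    exact ⟨hσ0 N hN.le, hσN.le⟩
  exact continuousAt_setIntegral_Ioc (u := fun N => -φ N) (c := -(φ N₀ + 1)) hφ.neg
    (by linarith)
    (Eventually.of_forall fun N => aestronglyMeasurable_integrand ha hImeas hKcont hKneg _ N)
    (hσ_ev.mono fun N hN w hw => norm_integrand_le ha hI hKm hKbd hw hN)
    fun w _ => continuousAt_const.mul (continuous_Zfun ha hσ w).continuousAt

end Phi

theorem stmt18_general (a VR VF : ℝ) (ha : 0 < a) (hV : VR < VF)
    (σ : ℝ → ℝ) (hσC2 : ContDiff ℝ 2 σ) (hσ0 : ∀ N, 0 ≤ N → 0 ≤ σ N)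
    (I : ℝ → ℝ) (hImeas : Measurable I) (nI : ℝ) (hI : ∀ x, |I x| ≤ nI)
    (K : ℝ → ℝ) (hKcont : ContinuousOn K (Set.Iio 0))
    (hKneg : ∀ w : ℝ, w < 0 → K w < 0)
    (Km KM : ℝ) (hKm : 0 < Km)
    (hKbd : ∀ w : ℝ, w < 0 → Km ≤ |K w| ∧ |K w| ≤ KM)
    (φ : ℝ → ℝ)
    (hφ : ∀ N : ℝ, 0 ≤ N →
      0 ≤ φ N ∧ N ^ 2 = ∫ w in Set.Ioc (-φ N) (0 : ℝ), w / K w) :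
    ∃ N > 0,
      (∫ w in Set.Ioc (-φ N) (0 : ℝ), (w / K w) * Zfun a VR VF I σ w N) = a * N := by
  have hσ : Continuous σ := hσC2.continuous
  have hKm' : ∀ w < 0, Km ≤ |K w| := fun w hw => (hKbd w hw).1
  have hG := strictMonoOn_setIntegral_Ioc_neg (integrableOn_div_apply hKcont hKneg hKm hKm')
    fun w hw => div_pos_of_neg_of_neg hw (hKneg w hw)
  have hG0 : (∫ w in Ioc (-0 : ℝ) 0, w / K w) = 0 := by simp
  obtain ⟨S, hup⟩ := exists_Phi_le_mul_sq ha hI hImeas hKcont hKneg hKm hKm' hσ hσ0 hφ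
    (monotoneOn_of_strictMonoOn_comp_eq_sq hG hφ)
  exact exists_pos_eq_mul_of_sq_bounds ha (lifPartition_pos ha hV _) (lifPartition_pos ha hV _)
    (fun N hN => continuousAt_Phi ha hI hImeas hKcont hKneg hKm hKm' hσ hσ0 hN
      (continuousAt_of_strictMonoOn_comp_eq_sq hG hG0 hφ hN))
    (fun N hN => mul_sq_le_Phi ha hI hImeas hKcont hKneg hKm hKm' hσ0 hφ hN.le) hup

/-- Existence of an inhibitory steady state under the learning rule
(Proposition 6.2, existence part): there is `N̄ > 0` with
`Φ(N̄) = ∫_{−φ(N̄)}^0 (w/K(w)) Z_{N̄,I}(w) dw = a N̄`. -/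
theorem stmt18 (a VR VF : ℝ) (ha : 0 < a) (hV : VR < VF)
    (σ : ℝ → ℝ) (hσC2 : ContDiff ℝ 2 σ) (hσ0 : ∀ N, 0 ≤ N → 0 ≤ σ N)
    (hσ' : ∀ N, 0 ≤ N → 0 ≤ deriv σ N)
    (I : ℝ → ℝ) (hImeas : Measurable I) (nI : ℝ) (hI : ∀ x, |I x| ≤ nI)
    (K : ℝ → ℝ) (hKcont : ContinuousOn K (Set.Iio 0))
    (hKneg : ∀ w : ℝ, w < 0 → K w < 0)
    (Km KM : ℝ) (hKm : 0 < Km) (hKmM : Km ≤ KM)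
    (hKbd : ∀ w : ℝ, w < 0 → Km ≤ |K w| ∧ |K w| ≤ KM)
    (φ : ℝ → ℝ)
    (hφ : ∀ N : ℝ, 0 ≤ N →
      0 ≤ φ N ∧ N ^ 2 = ∫ w in Set.Ioc (-φ N) (0 : ℝ), w / K w) :
    ∃ N > 0,
      (∫ w in Set.Ioc (-φ N) (0 : ℝ), (w / K w) * Zfun a VR VF I σ w N) = a * N :=
  stmt18_general a VR VF ha hV σ hσC2 hσ0 I hImeas nI hI K hKcont hKneg Km KM hKm hKbd φ hφ
end
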